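/- Consequently, every nonzero L_{n+1}-submodule of U(P)(1 ⊗ V) contains the subspace 1 ⊗ V. -/

import Mathlib

open MvPolynomial TensorProduct

noncomputable section

variable (F : Type) [Field F] (n : ℕ)

/-- Standard matrix units E_{i,j} of gl(n,F). -/
def EE (i j : Fin n) : Matrix (Fin n) (Fin n) F := Matrix.single i j 1

/-- x_i ∂_{x_j} as a linear endomorphism of F[x_1,…,x_n]. -/
def xdL (i j : Fin n) : MvPolynomial (Fin n) F →ₗ[F] MvPolynomial (Fin n) F :=
  (((X i : MvPolynomial (Fin n) F) • pderiv j :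
    Derivation F (MvPolynomial (Fin n) F) (MvPolynomial (Fin n) F))).toLinearMap

/-- ∂_{x_j}. -/
def ddL (j : Fin n) : MvPolynomial (Fin n) F →ₗ[F] MvPolynomial (Fin n) F :=
  ((pderiv j : Derivation F (MvPolynomial (Fin n) F) (MvPolynomial (Fin n) F))).toLinearMap

/-- p_i = x_i Σ_r x_r ∂_{x_r}. -/
def ptL (i : Fin n) : MvPolynomial (Fin n) F →ₗ[F] MvPolynomial (Fin n) F :=
  (((X i : MvPolynomial (Fin n) F) •
      ∑ r : Fin n, ((X r : MvPolynomial (Fin n) F) • pderiv r :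
        Derivation F (MvPolynomial (Fin n) F) (MvPolynomial (Fin n) F)) :
    Derivation F (MvPolynomial (Fin n) F) (MvPolynomial (Fin n) F))).toLinearMap

variable (V : Type) [AddCommGroup V] [Module F V]
variable (ρ : Matrix (Fin n) (Fin n) F →ₗ[F] Module.End F V)

/-- Action (3.10) of x_i∂_{x_j} on A ⊗ V. -/
def opX (i j : Fin n) : Module.End F (MvPolynomial (Fin n) F ⊗[F] V) :=
  TensorProduct.map (xdL F n i j) LinearMap.id +
    TensorProduct.map LinearMap.id (ρ (EE F n i j))

/-- Action (3.11) of ∂_{x_i} on A ⊗ V. -/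
def opD (i : Fin n) : Module.End F (MvPolynomial (Fin n) F ⊗[F] V) :=
  TensorProduct.map (ddL F n i) LinearMap.id

/-- Action (3.12) of p_i on A ⊗ V. -/
def opP (i : Fin n) : Module.End F (MvPolynomial (Fin n) F ⊗[F] V) :=
  TensorProduct.map (ptL F n i) LinearMap.id +
    TensorProduct.map (LinearMap.mulLeft F (X i)) (ρ (1 : Matrix (Fin n) (Fin n) F)) +
    ∑ j : Fin n, TensorProduct.map (LinearMap.mulLeft F (X j)) (ρ (EE F n i j))

/-- The subspace U(P)(1 ⊗ V). -/
def UP : Submodule F (MvPolynomial (Fin n) F ⊗[F] V) :=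
  Submodule.span F
    {w | ∃ (l : List (Fin n)) (v : V),
      w = l.foldr (fun t u => opP F n V ρ t u) ((1 : MvPolynomial (Fin n) F) ⊗ₜ[F] v)}

/-- The degree-k homogeneous component (A ⊗ V)_{⟨k⟩}. -/
def Deg (k : ℕ) : Submodule F (MvPolynomial (Fin n) F ⊗[F] V) :=
  Submodule.span F
    {w | ∃ (c : Fin n →₀ ℕ) (v : V), (∑ i, c i) = k ∧
      w = (monomial c (1 : F)) ⊗ₜ[F] v}

/-- W is an L_{n+1}-submodule of A ⊗ V. -/
def IsLSubmodule (W : Submodule F (MvPolynomial (Fin n) F ⊗[F] V)) : Prop :=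
  ∀ w ∈ W, (∀ i j : Fin n, opX F n V ρ i j w ∈ W) ∧
    (∀ i : Fin n, opD F n V i w ∈ W) ∧ (∀ i : Fin n, opP F n V ρ i w ∈ W)

/-- ρ is a representation of gl(n,F). -/
def IsGlRep : Prop :=
  ∀ X Y : Matrix (Fin n) (Fin n) F, ρ (X * Y - Y * X) = ρ X * ρ Y - ρ Y * ρ X

/-- Irreducibility of the gl(n)-module V. -/
def IsIrreducibleRep : Prop :=
  (∃ v : V, v ≠ 0) ∧
  ∀ U : Submodule F V, (∀ X : Matrix (Fin n) (Fin n) F, ∀ u ∈ U, ρ X u ∈ U) →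
    U = ⊥ ∨ U = ⊤

/-- v is a highest weight vector of weight μ in V. -/
def IsHWVector (μ : Fin n → F) (v : V) : Prop :=
  v ≠ 0 ∧ (∀ i : Fin n, ρ (EE F n i i) v = μ i • v) ∧
    ∀ i j : Fin n, i < j → ρ (EE F n i j) v = 0

/-- The index set I(μ,j) of (2.11). -/
def Iset (μ : Fin n → F) (j : ℕ) : Set (Fin n → ℕ) :=
  {c | (∑ i, c i) = j ∧
    ∀ s t : Fin n, (s : ℕ) + 1 = (t : ℕ) →
      ∃ m : ℕ, μ s - μ t = (m : F) ∧ c t ≤ m}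

/-- The scalar q_c of Lemma 3.2.3. -/
def qc (μ : Fin n → F) (c : Fin n → ℕ) : F :=
  ∏ s : Fin n, ∏ i ∈ Finset.range (c s),
    (μ s + (∑ j, μ j) - ((s : ℕ) + 1) + (i + 1))

/-!
Take a nonzero `w ∈ W`, write it as `∑_c x^c ⊗ w_c`, and pick `c` of maximal total degree with
`w_c ≠ 0`. The coefficient of `x^d` in `∂^c w ∈ W` is a positive integer multiple of `w_{d+c}`,
so by maximality `∂^c w = 1 ⊗ m w_c` with `m > 0`, which is nonzero since `char F = 0`. Hence
`U = {u | 1 ⊗ u ∈ W}` is a nonzero subspace of `V`; it is `gl(n)`-stable because `x_i∂_{x_j}`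
acts on `1 ⊗ u` as `E_{i,j}` acts on `u`, so `U = V` by irreducibility.
-/

namespace MvPolynomial

variable {R σ N : Type*} [CommSemiring R] [AddCommMonoid N] [Module R N] [DecidableEq σ]

def tensorCoeffEquiv : MvPolynomial σ R ⊗[R] N ≃ₗ[R] (σ →₀ ℕ) →₀ N :=
  (TensorProduct.congr (basisMonomials σ R).repr (LinearEquiv.refl R N)).trans
    (finsuppScalarLeft R N (σ →₀ ℕ))

@[simp]
lemma tensorCoeffEquiv_tmul_apply (p : MvPolynomial σ R) (v : N) (d : σ →₀ ℕ) :
    tensorCoeffEquiv (p ⊗ₜ[R] v) d = coeff d p • v :=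
  finsuppScalarLeft_apply_tmul_apply ((basisMonomials σ R).repr p) _ _

lemma tensorCoeffEquiv_one_tmul (v : N) :
    tensorCoeffEquiv ((1 : MvPolynomial σ R) ⊗ₜ[R] v) = Finsupp.single 0 v := by
  ext d
  simp [coeff_one, Finsupp.single_apply, eq_comm]

lemma tensorCoeffEquiv_rTensor_pderiv_apply (i : σ) (w : MvPolynomial σ R ⊗[R] N)
    (d : σ →₀ ℕ) :
    tensorCoeffEquiv ((pderiv i).toLinearMap.rTensor N w) d =
      (d i + 1) • tensorCoeffEquiv w (d + Finsupp.single i 1) := by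
  induction w using TensorProduct.induction_on with
  | zero => simp
  | tmul p v =>
    rw [LinearMap.rTensor_tmul, Derivation.coeFn_coe, tensorCoeffEquiv_tmul_apply,
      tensorCoeffEquiv_tmul_apply, coeff_pderiv, mul_comm, mul_smul, ← Nat.cast_smul_eq_nsmul R,
      Nat.cast_succ]
  | add x y hx hy => simp only [map_add, Finsupp.add_apply, hx, hy, smul_add]

lemma eq_one_tmul_of_tensorCoeffEquiv_apply_eq_zero {w : MvPolynomial σ R ⊗[R] N}
    (h : ∀ d ≠ 0, tensorCoeffEquiv w d = 0) : w = 1 ⊗ₜ[R] tensorCoeffEquiv w 0 := by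
  apply tensorCoeffEquiv.injective
  ext d
  rcases eq_or_ne d 0 with rfl | hd
  · simp [tensorCoeffEquiv_one_tmul]
  · simp [tensorCoeffEquiv_one_tmul, h d hd, hd.symm]

variable {W : Submodule R (MvPolynomial σ R ⊗[R] N)}

lemma exists_mem_tensorCoeffEquiv_eq_nsmul_add
    (hW : ∀ i, ∀ w ∈ W, (pderiv i).toLinearMap.rTensor N w ∈ W) {w : MvPolynomial σ R ⊗[R] N}
    (hw : w ∈ W) (c : σ →₀ ℕ) :
    ∃ w' ∈ W, ∀ d, ∃ m : ℕ, 0 < m ∧ tensorCoeffEquiv w' d = m • tensorCoeffEquiv w (d + c) := by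
  obtain ⟨s, rfl⟩ : ∃ s : Multiset σ, Multiset.toFinsupp s = c := ⟨_, c.toMultiset_toFinsupp⟩
  induction s using Multiset.induction_on with
  | empty => exact ⟨w, hw, fun d => ⟨1, one_pos, by simp⟩⟩
  | cons i s ih =>
    obtain ⟨w', hw', hcoeff⟩ := ih
    refine ⟨_, hW i w' hw', fun d => ?_⟩
    obtain ⟨m, hm, hd⟩ := hcoeff (d + Finsupp.single i 1)
    refine ⟨(d i + 1) * m, by positivity, ?_⟩
    rw [tensorCoeffEquiv_rTensor_pderiv_apply, hd, smul_smul, ← Multiset.singleton_add,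
      Multiset.toFinsupp_add, Multiset.toFinsupp_singleton, add_assoc]

lemma exists_one_tmul_mem_of_ne_bot [IsAddTorsionFree N]
    (hW : ∀ i, ∀ w ∈ W, (pderiv i).toLinearMap.rTensor N w ∈ W) (hW0 : W ≠ ⊥) :
    ∃ v ≠ 0, (1 : MvPolynomial σ R) ⊗ₜ[R] v ∈ W := by
  obtain ⟨w, hwW, hw0⟩ := W.ne_bot_iff.mp hW0
  have hsupp : (tensorCoeffEquiv w).support.Nonempty := by simpa using hw0
  obtain ⟨c, hc, hmax⟩ := Finset.exists_max_image _ Finsupp.degree hsupp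
  obtain ⟨w', hw'W, hw'⟩ := exists_mem_tensorCoeffEquiv_eq_nsmul_add hW hwW c
  refine ⟨tensorCoeffEquiv w' 0, ?_, ?_⟩
  · obtain ⟨m, hm, h⟩ := hw' 0
    rw [h, zero_add]
    exact smul_ne_zero hm.ne' (Finsupp.mem_support_iff.mp hc)
  · rwa [← eq_one_tmul_of_tensorCoeffEquiv_apply_eq_zero fun d hd => ?_]
    obtain ⟨m, -, h⟩ := hw' d
    suffices d + c ∉ (tensorCoeffEquiv w).support by simp_all
    intro hdc
    have := hmax _ hdc
    rw [map_add] at this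
    exact hd ((Finsupp.degree_eq_zero_iff d).mp (by omega))

end MvPolynomial

section

variable {F n V ρ}

lemma opX_one_tmul (i j : Fin n) (v : V) :
    opX F n V ρ i j (1 ⊗ₜ v) = 1 ⊗ₜ ρ (EE F n i j) v := by
  simp [opX, xdL]

lemma apply_mem_of_forall_EE_apply_mem {U : Submodule F V}
    (hU : ∀ i j, ∀ u ∈ U, ρ (EE F n i j) u ∈ U) (X : Matrix (Fin n) (Fin n) F) {u : V}
    (hu : u ∈ U) : ρ X u ∈ U := by
  have hX : X = ∑ i, ∑ j, X i j • EE F n i j := by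
    simpa [EE, Matrix.smul_single] using X.matrix_eq_sum_single
  rw [hX]
  simp only [map_sum, map_smul, LinearMap.sum_apply, LinearMap.smul_apply]
  exact sum_mem fun i _ => sum_mem fun j _ => U.smul_mem _ (hU i j u hu)

end

theorem nonzero_submodule_of_UP_contains_one_tensor [CharZero F]
    (hirr : IsIrreducibleRep F n V ρ)
    (W : Submodule F (MvPolynomial (Fin n) F ⊗[F] V))
    (hW : IsLSubmodule F n V ρ W) (hW0 : W ≠ ⊥) :
    ∀ v : V, ((1 : MvPolynomial (Fin n) F) ⊗ₜ[F] v) ∈ W := by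
  have := IsAddTorsionFree.of_isTorsionFree F V
  obtain ⟨v₀, hv₀, hv₀W⟩ := exists_one_tmul_mem_of_ne_bot (fun i w hw => (hW w hw).2.1 i) hW0
  let U := W.comap (TensorProduct.mk F (MvPolynomial (Fin n) F) V 1)
  have hU_inv : ∀ X, ∀ u ∈ U, ρ X u ∈ U := apply_mem_of_forall_EE_apply_mem fun i j u hu => by
    simpa [U, opX_one_tmul] using (hW _ hu).1 i j
  have hU_top : U = ⊤ := (hirr.2 U hU_inv).resolve_left fun hU_bot => by
    have hv₀U : v₀ ∈ U := hv₀W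
    rw [hU_bot, Submodule.mem_bot] at hv₀U
    exact hv₀ hv₀U
  intro v
  exact (hU_top ▸ Submodule.mem_top : v ∈ U)

end
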